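/- For all real η ≠ 0, setting Υ(x₀,x₁) := cos(η x₀)(cos(η x₀) cosh(η x₁) + sinh(η x₁)), the functions π₀₁(x) = −(tanh(η x₂)/η) Υ(x₀,x₁), π₀₂(x) = (tanh(η x₁)/η) Υ(x₀,x₁), π₁₂(x) = (tan(η x₀)/η) Υ(x₀,x₁), extended antisymmetrically by π_ba = −π_ab and π_aa = 0, satisfy the Jacobi identity for a Poisson bivector: for every x ∈ ℝ³ with cos(η x₀) ≠ 0, Σ_{l=0}^{2} ( π_{0l}(x) ∂_l π_{12}(x) + π_{1l}(x) ∂_l π_{20}(x) + π_{2l}(x) ∂_l π_{01}(x) ) = 0, where ∂_l denotes the partial derivative in the variable x_l. Hence these functions define the Poisson-subgroup Poisson homogeneous structure on AdS₃ associated with the double D(sl(2,ℝ)). -/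

import Mathlib

open Real

/-- `Υ(x₀,x₁) = cos(ηx₀)(cos(ηx₀)cosh(ηx₁) + sinh(ηx₁))`. -/
noncomputable def Ups (η : ℝ) (x : Fin 3 → ℝ) : ℝ :=
  Real.cos (η * x 0) * (Real.cos (η * x 0) * Real.cosh (η * x 1) + Real.sinh (η * x 1))

/-- `π₀₁` for the Poisson-subgroup Poisson structure on AdS₃. -/
noncomputable def rho01 (η : ℝ) (x : Fin 3 → ℝ) : ℝ :=
  -(Real.tanh (η * x 2) / η) * Ups η x

/-- `π₀₂` for the Poisson-subgroup Poisson structure on AdS₃. -/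
noncomputable def rho02 (η : ℝ) (x : Fin 3 → ℝ) : ℝ :=
  (Real.tanh (η * x 1) / η) * Ups η x

/-- `π₁₂` for the Poisson-subgroup Poisson structure on AdS₃. -/
noncomputable def rho12 (η : ℝ) (x : Fin 3 → ℝ) : ℝ :=
  (Real.tan (η * x 0) / η) * Ups η x

/-- The skew-symmetric bivector matrix `π_ab` of the Poisson-subgroup structure. -/
noncomputable def piSubgroupAdS (η : ℝ) (a b : Fin 3) (x : Fin 3 → ℝ) : ℝ :=
  !![0, rho01 η x, rho02 η x;
     -(rho01 η x), 0, rho12 η x;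
     -(rho02 η x), -(rho12 η x), 0] a b

/-!
Identify the bivector with the vector field `P` via `π_ab = ε_abc P_c`; then the Jacobi
identity in `ℝ³` reads `P · curl P = 0`. Here `P = Υ W` where `W_c` depends on `x_c` alone, so
`curl W = 0` and `curl P = ∇Υ × W`, which is orthogonal to `W` and hence to `P`.
-/

open Matrix

theorem Real.differentiable_tanh : Differentiable ℝ Real.tanh := by
  have h : Real.tanh = fun t => Real.sinh t / Real.cosh t := funext Real.tanh_eq_sinh_div_cosh
  rw [h]
  exact Real.differentiable_sinh.div Real.differentiable_cosh fun t => (Real.cosh_pos t).ne'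

section Calculus

variable {ι : Type*} [Fintype ι] [DecidableEq ι]

noncomputable def grad (f : (ι → ℝ) → ℝ) (x : ι → ℝ) : ι → ℝ :=
  fun l => fderiv ℝ f x (Pi.single l 1)

theorem grad_mul {f g : (ι → ℝ) → ℝ} {x : ι → ℝ} (hf : DifferentiableAt ℝ f x)
    (hg : DifferentiableAt ℝ g x) :
    grad (fun y => f y * g y) x = f x • grad g x + g x • grad f x := by
  ext l
  simp [grad, fderiv_fun_mul hf hg]

theorem grad_comp_eval {g : ℝ → ℝ} {c : ι} {x : ι → ℝ} (hg : DifferentiableAt ℝ g (x c)) :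
    grad (fun y => g (y c)) x = Pi.single c (deriv g (x c)) := by
  ext l
  have h : HasFDerivAt (fun y : ι → ℝ => g (y c))
      (deriv g (x c) • ContinuousLinearMap.proj c) x :=
    hg.hasDerivAt.comp_hasFDerivAt (f := fun y : ι → ℝ => y c) x (hasFDerivAt_apply (𝕜 := ℝ) c x)
  simp [grad, h.fderiv, Pi.single_apply, eq_comm]

end Calculus

noncomputable def curl (P : Fin 3 → (Fin 3 → ℝ) → ℝ) (x : Fin 3 → ℝ) : Fin 3 → ℝ :=
  ![grad (P 2) x 1 - grad (P 1) x 2, grad (P 0) x 2 - grad (P 2) x 0,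
    grad (P 1) x 0 - grad (P 0) x 1]

theorem curl_mul {f : (Fin 3 → ℝ) → ℝ} {V : Fin 3 → (Fin 3 → ℝ) → ℝ} {x : Fin 3 → ℝ}
    (hf : DifferentiableAt ℝ f x) (hV : ∀ c, DifferentiableAt ℝ (V c) x) :
    curl (fun c y => f y * V c y) x = f x • curl V x + grad f x ⨯₃ fun c => V c x := by
  ext c
  fin_cases c <;>
    simp only [curl, grad_mul hf (hV _), cross_apply, Pi.add_apply, Pi.smul_apply, smul_eq_mul,
      Fin.isValue, Fin.mk_one, Fin.reduceFinMk, Fin.zero_eta, cons_val, cons_val_zero,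
      cons_val_one] <;>
    ring

theorem curl_comp_eval {g : Fin 3 → ℝ → ℝ} {x : Fin 3 → ℝ}
    (hg : ∀ c, DifferentiableAt ℝ (g c) (x c)) :
    curl (fun c y => g c (y c)) x = 0 := by
  ext c
  fin_cases c <;> simp [curl, grad_comp_eval (hg _)]

theorem dotProduct_curl_mul_eq_zero {f : (Fin 3 → ℝ) → ℝ} {V : Fin 3 → (Fin 3 → ℝ) → ℝ}
    {x : Fin 3 → ℝ} (hf : DifferentiableAt ℝ f x) (hV : ∀ c, DifferentiableAt ℝ (V c) x)
    (hcurl : curl V x = 0) :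
    (fun c => f x * V c x) ⬝ᵥ curl (fun c y => f y * V c y) x = 0 := by
  have hfV : (fun c => f x * V c x) = f x • fun c => V c x := rfl
  rw [curl_mul hf hV, hcurl, smul_zero, zero_add, hfV, smul_dotProduct, dot_cross_self,
    smul_zero]

noncomputable def jacobiator (B : Fin 3 → Fin 3 → (Fin 3 → ℝ) → ℝ) (x : Fin 3 → ℝ) : ℝ :=
  ∑ l : Fin 3,
    (B 0 l x * fderiv ℝ (B 1 2) x (Pi.single l 1) +
     B 1 l x * fderiv ℝ (B 2 0) x (Pi.single l 1) +
     B 2 l x * fderiv ℝ (B 0 1) x (Pi.single l 1))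

/-- `π_ab = ε_abc P_c`. -/
def bivectorOfVectorField (P : Fin 3 → (Fin 3 → ℝ) → ℝ) (a b : Fin 3) (x : Fin 3 → ℝ) : ℝ :=
  !![0, P 2 x, -P 1 x;
     -P 2 x, 0, P 0 x;
     P 1 x, -P 0 x, 0] a b

theorem jacobiator_bivectorOfVectorField (P : Fin 3 → (Fin 3 → ℝ) → ℝ) (x : Fin 3 → ℝ) :
    jacobiator (bivectorOfVectorField P) x = -((fun c => P c x) ⬝ᵥ curl P x) := by
  have h12 : bivectorOfVectorField P 1 2 = P 0 := rfl
  have h20 : bivectorOfVectorField P 2 0 = P 1 := rfl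
  have h01 : bivectorOfVectorField P 0 1 = P 2 := rfl
  simp only [jacobiator, h12, h20, h01]
  simp only [Fin.sum_univ_three, bivectorOfVectorField, curl, grad, dotProduct, of_apply,
    Fin.isValue, cons_val, cons_val', cons_val_fin_one, cons_val_zero, cons_val_one]
  ring

theorem poisson_subgroup_AdS_jacobi_general (η : ℝ) :
    ∀ x : Fin 3 → ℝ, Real.cos (η * x 0) ≠ 0 →
      ∑ l : Fin 3,
        (piSubgroupAdS η 0 l x * fderiv ℝ (piSubgroupAdS η 1 2) x (Pi.single l 1) +
         piSubgroupAdS η 1 l x * fderiv ℝ (piSubgroupAdS η 2 0) x (Pi.single l 1) +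
         piSubgroupAdS η 2 l x * fderiv ℝ (piSubgroupAdS η 0 1) x (Pi.single l 1)) = 0 := by
  intro x hx
  set W : Fin 3 → ℝ → ℝ :=
    ![fun t => Real.tan (η * t) / η, fun t => -(Real.tanh (η * t) / η),
      fun t => -(Real.tanh (η * t) / η)]
  have hπ : piSubgroupAdS η = bivectorOfVectorField fun c y => Ups η y * W c (y c) := by
    funext a b y
    fin_cases a <;> fin_cases b <;>
      simp only [piSubgroupAdS, bivectorOfVectorField, W, rho01, rho02, rho12, of_apply,
        Fin.isValue, Fin.mk_one, Fin.reduceFinMk, Fin.zero_eta, cons_val, cons_val', cons_val_fin_one,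
        cons_val_zero, cons_val_one] <;>
      ring
  have hUps : DifferentiableAt ℝ (Ups η) x := by
    unfold Ups; fun_prop
  have hWdiff : ∀ c, DifferentiableAt ℝ (W c) (x c) := by
    intro c
    fin_cases c
    · exact ((Real.differentiableAt_tan.2 hx).comp _ (by fun_prop)).div_const η
    all_goals exact ((differentiable_tanh.comp (differentiable_id.const_mul η)).div_const η).neg _
  have hV : ∀ c, DifferentiableAt ℝ (fun y : Fin 3 → ℝ => W c (y c)) x := fun c =>
    (hWdiff c).comp (f := fun y : Fin 3 → ℝ => y c) x (differentiableAt_apply c x)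
  change jacobiator (piSubgroupAdS η) x = 0
  rw [hπ, jacobiator_bivectorOfVectorField,
    dotProduct_curl_mul_eq_zero hUps hV (curl_comp_eval hWdiff), neg_zero]

/-- For all real `η ≠ 0`, the bivector components built from
`Υ(x₀,x₁) = cos(ηx₀)(cos(ηx₀)cosh(ηx₁) + sinh(ηx₁))` satisfy the Jacobi identity
`Σ_l (π₀ₗ ∂ₗπ₁₂ + π₁ₗ ∂ₗπ₂₀ + π₂ₗ ∂ₗπ₀₁) = 0` at every point with `cos(ηx₀) ≠ 0`,
hence define the Poisson-subgroup Poisson homogeneous structure on AdS₃ associated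
with the double `D(sl(2,ℝ))`. -/
theorem poisson_subgroup_AdS_jacobi (η : ℝ) (hη : η ≠ 0) :
    ∀ x : Fin 3 → ℝ, Real.cos (η * x 0) ≠ 0 →
      ∑ l : Fin 3,
        (piSubgroupAdS η 0 l x * fderiv ℝ (piSubgroupAdS η 1 2) x (Pi.single l 1) +
         piSubgroupAdS η 1 l x * fderiv ℝ (piSubgroupAdS η 2 0) x (Pi.single l 1) +
         piSubgroupAdS η 2 l x * fderiv ℝ (piSubgroupAdS η 0 1) x (Pi.single l 1)) = 0 :=
  poisson_subgroup_AdS_jacobi_general η
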